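/- Statement (18) of the paper: Under the hypotheses of Theorem 2 — fixed K₀ ≥ 1 and c₀ > 0; for each T an integer n(T) ≥ K₀, a partition {G₁^{(T)},…,G_{K₀}^{(T)}} of {1,…,n(T)} into K₀ nonempty groups, a random symmetric array d̂^{(T)} with probability measure P_T, h_max(T) > 0 with (log n(T)+log T)/(T·h_max(T)) → 0; property (8): for every ε > 0 there exists C with limsup_T P_T( max_{k} max_{i,j∈G_k^{(T)}, i≠j} d̂^{(T)}_{ij} > C·√(log n(T)+log T) ) ≤ ε; property (9): min_{k<k′} min_{i∈G_k^{(T)}, j∈G_{k′}^{(T)}} d̂^{(T)}_{ij} ≥ c₀·√(T·h_max(T)) + R_T with R_T/√(T·h_max(T)) → 0 in probability; and a deterministic sequence π_T with π_T/√(log n(T)+log T) → ∞ and π_T/√(T·h_max(T)) → 0 — it holds that P_T( max_{C ∈ P^{n(T)−K₀}(d̂^{(T)})} Δ(C) ≤ π_T ) → 1 as T → ∞, where P^{n−K₀}(d) is the complete-linkage HAC partition into K₀ clusters computed from d. -/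

import Mathlib

open Finset

/-- Complete-linkage dissimilarity `Δ(S,S') = max_{i ∈ S, j ∈ S'} d i j`, as an
extended real (so that the value over an empty index set is `⊥`). -/
noncomputable def cLink {n : ℕ} (d : Fin n → Fin n → ℝ) (S S' : Finset (Fin n)) : EReal :=
  sSup {x : EReal | ∃ i ∈ S, ∃ j ∈ S', x = (d i j : EReal)}

/-- Within-cluster dissimilarity `Δ(C) = max_{i,j ∈ C, i ≠ j} d i j`, as an extended real;
for a singleton (or empty) cluster the value is `⊥`, which is smaller than every real. -/
noncomputable def cDiam {n : ℕ} (d : Fin n → Fin n → ℝ) (C : Finset (Fin n)) : EReal :=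
  sSup {x : EReal | ∃ i ∈ C, ∃ j ∈ C, i ≠ j ∧ x = (d i j : EReal)}

/-- The initial partition of `{1,…,n}` into `n` singleton clusters. -/
def singletonPartition (n : ℕ) : Finset (Finset (Fin n)) :=
  Finset.univ.image fun i : Fin n => ({i} : Finset (Fin n))

/-- `Q` is obtained from `P` by merging one pair of distinct clusters attaining the
minimum of the complete-linkage dissimilarity `Δ` over all pairs of distinct clusters. -/
def IsMergeStep {n : ℕ} (d : Fin n → Fin n → ℝ) (P Q : Finset (Finset (Fin n))) : Prop :=
  ∃ C ∈ P, ∃ C' ∈ P, C ≠ C' ∧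
    (∀ D ∈ P, ∀ D' ∈ P, D ≠ D' → cLink d C C' ≤ cLink d D D') ∧
    Q = insert (C ∪ C') ((P.erase C).erase C')

/-- A run of the complete-linkage HAC algorithm (with an arbitrary choice of
tie-breaking at each step): `P 0` is the singleton partition and for every
`r < n - 1`, `P (r+1)` is obtained from `P r` by a merge step. -/
def IsHACChain {n : ℕ} (d : Fin n → Fin n → ℝ) (P : ℕ → Finset (Finset (Fin n))) : Prop :=
  P 0 = singletonPartition n ∧ ∀ r, r < n - 1 → IsMergeStep d (P r) (P (r + 1))

/-- `G` is a partition of `{1,…,n}` into `K₀` nonempty groups. -/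
def IsGroupPartition {n K₀ : ℕ} (G : Fin K₀ → Finset (Fin n)) : Prop :=
  (∀ k, (G k).Nonempty) ∧ (∀ i : Fin n, ∃ k, i ∈ G k) ∧
    ∀ k k' : Fin K₀, k ≠ k' → Disjoint (G k) (G k')

/-- The partition `G` is `d`-separated: every within-group distance is strictly smaller
than every between-group distance (vacuously true when `K₀ = 1`). -/
def IsSeparated {n K₀ : ℕ} (d : Fin n → Fin n → ℝ) (G : Fin K₀ → Finset (Fin n)) : Prop :=
  ∀ k : Fin K₀, ∀ i ∈ G k, ∀ j ∈ G k, i ≠ j →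
    ∀ k₁ k₂ : Fin K₀, k₁ ≠ k₂ → ∀ a ∈ G k₁, ∀ b ∈ G k₂, d i j < d a b

/-- `A` is a refinement of `B`: every element of `A` is a subset of some element of `B`. -/
def IsRefinement {n : ℕ} (A B : Finset (Finset (Fin n))) : Prop :=
  ∀ C ∈ A, ∃ D ∈ B, C ⊆ D

/-- The thresholded dendrogram estimator of the number of groups:
`K̂₀(d,π) = min { K ∈ {1,…,n} : every cluster of the HAC partition into K clusters has
within-cluster dissimilarity at most π }`. -/
noncomputable def Khat {n : ℕ} (d : Fin n → Fin n → ℝ)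
    (P : ℕ → Finset (Finset (Fin n))) (π : ℝ) : ℕ :=
  sInf {K : ℕ | 1 ≤ K ∧ K ≤ n ∧ ∀ C ∈ P (n - K), cDiam d C ≤ (π : EReal)}

/-- Maximal within-group distance `max_{k} max_{i,j ∈ G k, i ≠ j} d i j` (real-valued
supremum; by Mathlib's convention it is `0` if there is no within-group pair). -/
noncomputable def withinMax {n K₀ : ℕ} (d : Fin n → Fin n → ℝ)
    (G : Fin K₀ → Finset (Fin n)) : ℝ :=
  sSup {x : ℝ | ∃ k, ∃ i ∈ G k, ∃ j ∈ G k, i ≠ j ∧ x = d i j}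

/-- Minimal between-group distance `min_{k < k'} min_{i ∈ G k, j ∈ G k'} d i j`
(real-valued infimum). -/
noncomputable def betweenMin {n K₀ : ℕ} (d : Fin n → Fin n → ℝ)
    (G : Fin K₀ → Finset (Fin n)) : ℝ :=
  sInf {x : ℝ | ∃ k k' : Fin K₀, k ≠ k' ∧ ∃ i ∈ G k, ∃ j ∈ G k', x = d i j}

/-!
If every within-group dissimilarity is smaller than every between-group one, complete linkage
never merges clusters from different groups while more than `K₀` clusters remain: by pigeonhole
two clusters lie in a common group, and their linkage is a within-group dissimilarity, hence
smaller than the linkage of any two clusters from different groups. So each of the `K₀` final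
clusters lies inside a group, and its diameter is at most the within-group maximum.
With probability tending to one, this maximum is at most `C √(log n + log T)`, which is below
`π_T` by (10) and, by the rate condition on `h_max`, below `(c₀/2) √(T h_max)`; by (9) the
between-group minimum exceeds the latter, so the groups are separated.
-/

open MeasureTheory Filter Topology

section Extrema

variable {n K₀ : ℕ} (d : Fin n → Fin n → ℝ) (G : Fin K₀ → Finset (Fin n))

lemma le_withinMax {k : Fin K₀} {i j : Fin n} (hi : i ∈ G k) (hj : j ∈ G k) (hij : i ≠ j) :
    d i j ≤ withinMax d G := by
  refine le_csSup ((Set.finite_range (Function.uncurry d)).subset ?_).bddAbove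
    ⟨k, i, hi, j, hj, hij, rfl⟩
  rintro _ ⟨_, i, -, j, -, -, rfl⟩
  exact ⟨(i, j), rfl⟩

lemma betweenMin_le {k k' : Fin K₀} {i j : Fin n} (hk : k ≠ k') (hi : i ∈ G k)
    (hj : j ∈ G k') : betweenMin d G ≤ d i j := by
  refine csInf_le ((Set.finite_range (Function.uncurry d)).subset ?_).bddBelow
    ⟨k, k', hk, i, hi, j, hj, rfl⟩
  rintro _ ⟨_, _, -, i, -, j, -, rfl⟩
  exact ⟨(i, j), rfl⟩

lemma isSeparated_of_withinMax_lt_betweenMin (h : withinMax d G < betweenMin d G) :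
    IsSeparated d G :=
  fun _ _ hi _ hj hij _ _ hk _ ha _ hb =>
    (le_withinMax d G hi hj hij).trans_lt (h.trans_le (betweenMin_le d G hk ha hb))

lemma isSeparated_of_le_one (hK : K₀ ≤ 1) : IsSeparated d G :=
  fun _ _ _ _ _ _ k₁ k₂ hk => absurd (Fin.ext (by omega)) hk

lemma cDiam_le_of_subset {C : Finset (Fin n)} {k : Fin K₀} (hC : C ⊆ G k) {p : ℝ}
    (hp : withinMax d G ≤ p) : cDiam d C ≤ p :=
  sSup_le fun _ ⟨_, hi, _, hj, hij, hx⟩ =>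
    hx ▸ EReal.coe_le_coe_iff.mpr ((le_withinMax d G (hC hi) (hC hj) hij).trans hp)

lemma le_cLink {S S' : Finset (Fin n)} {i j : Fin n} (hi : i ∈ S) (hj : j ∈ S') :
    (d i j : EReal) ≤ cLink d S S' :=
  le_sSup ⟨i, hi, j, hj, rfl⟩

lemma exists_cLink_eq {S S' : Finset (Fin n)} (hS : S.Nonempty) (hS' : S'.Nonempty) :
    ∃ i ∈ S, ∃ j ∈ S', cLink d S S' = d i j := by
  obtain ⟨i, hi⟩ := hS
  obtain ⟨j, hj⟩ := hS'
  refine Set.Nonempty.csSup_mem (s := {x : EReal | ∃ i ∈ S, ∃ j ∈ S', x = d i j})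
    ⟨_, i, hi, j, hj, rfl⟩ ?_
  refine (Set.finite_range fun p : Fin n × Fin n => (d p.1 p.2 : EReal)).subset ?_
  rintro _ ⟨i, -, j, -, rfl⟩
  exact ⟨(i, j), rfl⟩

end Extrema

section Clusterings

variable {α : Type*} [DecidableEq α]

def IsClustering (P : Finset (Finset α)) : Prop :=
  (∀ C ∈ P, C.Nonempty) ∧ (P : Set (Finset α)).Pairwise Disjoint

variable {P : Finset (Finset α)} {C C' : Finset α}

lemma IsClustering.union_notMem_erase_erase (hP : IsClustering P) (hC : C ∈ P) :
    C ∪ C' ∉ (P.erase C).erase C' := by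
  intro h
  have hmem := mem_of_mem_erase (mem_of_mem_erase h)
  have hne : C ∪ C' ≠ C := ne_of_mem_erase (mem_of_mem_erase h)
  obtain ⟨a, ha⟩ := hP.1 C hC
  exact disjoint_left.mp (hP.2 hmem hC hne) (mem_union_left _ ha) ha

lemma IsClustering.card_merge (hP : IsClustering P) (hC : C ∈ P) (hC' : C' ∈ P)
    (hne : C ≠ C') : (insert (C ∪ C') ((P.erase C).erase C')).card + 1 = P.card := by
  rw [card_insert_of_notMem (hP.union_notMem_erase_erase hC),
    card_erase_of_mem (mem_erase.mpr ⟨hne.symm, hC'⟩), card_erase_of_mem hC]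
  have : 2 ≤ P.card := one_lt_card.mpr ⟨C, hC, C', hC', hne⟩
  omega

lemma IsClustering.merge (hP : IsClustering P) (hC : C ∈ P) (hC' : C' ∈ P) :
    IsClustering (insert (C ∪ C') ((P.erase C).erase C')) := by
  have hrest : ∀ {X}, X ∈ (P.erase C).erase C' → X ∈ P ∧ X ≠ C ∧ X ≠ C' := fun hX =>
    ⟨mem_of_mem_erase (mem_of_mem_erase hX), ne_of_mem_erase (mem_of_mem_erase hX),
      ne_of_mem_erase hX⟩
  have hunion : ∀ {X}, X ∈ (P.erase C).erase C' → Disjoint (C ∪ C') X := fun hX =>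
    let ⟨hX, hXC, hXC'⟩ := hrest hX
    disjoint_union_left.mpr ⟨hP.2 hC hX hXC.symm, hP.2 hC' hX hXC'.symm⟩
  refine ⟨fun X hX => ?_, ?_⟩
  · rcases mem_insert.mp hX with rfl | hX
    · exact (hP.1 C hC).mono subset_union_left
    · exact hP.1 X (hrest hX).1
  · rw [coe_insert]
    refine Set.Pairwise.insert (fun X hX Y hY => hP.2 (hrest hX).1 (hrest hY).1)
      fun X hX _ => ⟨hunion hX, (hunion hX).symm⟩

lemma isClustering_singletonPartition (n : ℕ) : IsClustering (singletonPartition n) := by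
  refine ⟨?_, ?_⟩
  · simp [singletonPartition]
  · rintro _ hC _ hC' hne
    simp only [singletonPartition, coe_image, coe_univ, Set.image_univ, Set.mem_range] at hC hC'
    obtain ⟨i, rfl⟩ := hC
    obtain ⟨j, rfl⟩ := hC'
    exact disjoint_singleton.mpr fun h => hne (h ▸ rfl)

lemma card_singletonPartition (n : ℕ) : (singletonPartition n).card = n := by
  rw [singletonPartition, card_image_of_injective _ singleton_injective, card_univ,
    Fintype.card_fin]

end Clusterings

section Pigeonhole

variable {α ι : Type*} [Fintype ι] {G : ι → Finset α} {P : Finset (Finset α)}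

lemma exists_ne_subset_of_card_lt (hPG : ∀ C ∈ P, ∃ k, C ⊆ G k)
    (hcard : Fintype.card ι < P.card) :
    ∃ D ∈ P, ∃ D' ∈ P, D ≠ D' ∧ ∃ k, D ⊆ G k ∧ D' ⊆ G k := by
  choose group hgroup using hPG
  obtain ⟨⟨D, hD⟩, ⟨D', hD'⟩, hne, heq⟩ :=
    Fintype.exists_ne_map_eq_of_card_lt (fun C : P => group C.1 C.2) (by simpa using hcard)
  refine ⟨D, hD, D', hD', fun h => hne (Subtype.ext h), group D hD, hgroup D hD, ?_⟩
  exact heq ▸ hgroup D' hD'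

end Pigeonhole

section HAC

variable {n K₀ : ℕ} {d : Fin n → Fin n → ℝ} {G : Fin K₀ → Finset (Fin n)}

lemma IsSeparated.cLink_lt (hsep : IsSeparated d G) {D D' C C' : Finset (Fin n)}
    {k k₁ k₂ : Fin K₀} (hD : D.Nonempty) (hD' : D'.Nonempty) (hDD' : Disjoint D D')
    (hDk : D ⊆ G k) (hD'k : D' ⊆ G k) (hC : C.Nonempty) (hC' : C'.Nonempty) (hCk : C ⊆ G k₁)
    (hC'k : C' ⊆ G k₂) (hk : k₁ ≠ k₂) :
    cLink d D D' < cLink d C C' := by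
  obtain ⟨i, hi, j, hj, hlink⟩ := exists_cLink_eq d hD hD'
  obtain ⟨a, ha⟩ := hC
  obtain ⟨b, hb⟩ := hC'
  have hij : i ≠ j := fun h => disjoint_left.mp hDD' hi (h ▸ hj)
  calc cLink d D D' = d i j := hlink
    _ < d a b := EReal.coe_lt_coe_iff.mpr
      (hsep k i (hDk hi) j (hD'k hj) hij k₁ k₂ hk a (hCk ha) b (hC'k hb))
    _ ≤ cLink d C C' := le_cLink d ha hb

def RefinesGroups (G : Fin K₀ → Finset (Fin n)) (P : Finset (Finset (Fin n))) : Prop :=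
  IsClustering P ∧ ∀ C ∈ P, ∃ k, C ⊆ G k

lemma refinesGroups_singletonPartition (hG : IsGroupPartition G) :
    RefinesGroups G (singletonPartition n) := by
  refine ⟨isClustering_singletonPartition n, ?_⟩
  simp only [singletonPartition, mem_image, mem_univ, true_and]
  rintro _ ⟨i, rfl⟩
  obtain ⟨k, hk⟩ := hG.2.1 i
  exact ⟨k, singleton_subset_iff.mpr hk⟩

lemma IsMergeStep.refinesGroups (hsep : IsSeparated d G) {P Q : Finset (Finset (Fin n))}
    (hP : RefinesGroups G P) (hcard : K₀ < P.card) (hstep : IsMergeStep d P Q) :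
    RefinesGroups G Q ∧ Q.card + 1 = P.card := by
  obtain ⟨⟨hne, hdisj⟩, hPG⟩ := hP
  obtain ⟨C, hC, C', hC', hCC', hmin, rfl⟩ := hstep
  obtain ⟨D, hD, D', hD', hDD', k, hDk, hD'k⟩ :=
    exists_ne_subset_of_card_lt hPG (by rwa [Fintype.card_fin])
  obtain ⟨k₁, hCk⟩ := hPG C hC
  obtain ⟨k₂, hC'k⟩ := hPG C' hC'
  obtain rfl : k₁ = k₂ := by
    by_contra hk
    exact (hmin D hD D' hD' hDD').not_gt <| hsep.cLink_lt (hne D hD) (hne D' hD')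
      (hdisj hD hD' hDD') hDk hD'k (hne C hC) (hne C' hC') hCk hC'k hk
  refine ⟨⟨IsClustering.merge ⟨hne, hdisj⟩ hC hC', fun X hX => ?_⟩,
    IsClustering.card_merge ⟨hne, hdisj⟩ hC hC' hCC'⟩
  rcases mem_insert.mp hX with rfl | hX
  · exact ⟨k₁, union_subset hCk hC'k⟩
  · exact hPG X (mem_of_mem_erase (mem_of_mem_erase hX))

lemma IsHACChain.refinesGroups (hK : 1 ≤ K₀) (hG : IsGroupPartition G)
    (hsep : IsSeparated d G) {Q : ℕ → Finset (Finset (Fin n))} (hQ : IsHACChain d Q) :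
    ∀ r ≤ n - K₀, RefinesGroups G (Q r) ∧ (Q r).card + r = n := by
  intro r
  induction r with
  | zero =>
    exact fun _ => hQ.1 ▸ ⟨refinesGroups_singletonPartition hG, card_singletonPartition n⟩
  | succ r ih =>
    intro hr
    obtain ⟨hP, hcard⟩ := ih (by omega)
    obtain ⟨hQr, hcard'⟩ := hQ.2 r (by omega) |>.refinesGroups hsep hP (by omega)
    exact ⟨hQr, by omega⟩

lemma IsHACChain.cDiam_le (hK : 1 ≤ K₀) (hG : IsGroupPartition G) (hsep : IsSeparated d G)
    {Q : ℕ → Finset (Finset (Fin n))} (hQ : IsHACChain d Q) {p : ℝ}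
    (hp : withinMax d G ≤ p) : ∀ C ∈ Q (n - K₀), cDiam d C ≤ p := fun C hC =>
  let ⟨_, hk⟩ := (hQ.refinesGroups hK hG hsep (n - K₀) le_rfl).1.2 C hC
  cDiam_le_of_subset d G hk hp

end HAC

section Asymptotics

variable {ι : Type*} {l : Filter ι}

lemma eventually_mul_le_of_tendsto_div_atTop {f g : ι → ℝ} (hg : ∀ i, 0 ≤ g i)
    (h : Tendsto (fun i => f i / g i) l atTop) (C : ℝ) : ∀ᶠ i in l, C * g i ≤ f i := by
  filter_upwards [h.eventually_ge_atTop (max C 1)] with i hi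
  have hpos : 0 < g i := (hg i).lt_of_ne fun h0 => by
    rw [← h0, div_zero] at hi
    linarith [le_max_right C 1]
  exact (le_div_iff₀ hpos).mp ((le_max_left C 1).trans hi)

lemma eventually_mul_sqrt_lt_of_tendsto_div {a b : ι → ℝ} (hb : ∀ᶠ i in l, 0 < b i)
    (h : Tendsto (fun i => a i / b i) l (𝓝 0)) (C : ℝ) {δ : ℝ} (hδ : 0 < δ) :
    ∀ᶠ i in l, C * √(a i) < δ * √(b i) := by
  have hsqrt : Tendsto (fun i => C * √(a i / b i)) l (𝓝 0) := by
    simpa using (h.sqrt).const_mul C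
  filter_upwards [hsqrt.eventually_lt_const hδ, hb] with i hi hbi
  have hsb : 0 < √(b i) := Real.sqrt_pos.mpr hbi
  rw [Real.sqrt_div' _ hbi.le, ← mul_div_assoc] at hi
  exact (div_lt_iff₀ hsb).mp hi

lemma tendsto_measure_one_of_eventually_compl_le {Ω : ι → Type*} [∀ i, MeasurableSpace (Ω i)]
    (μ : ∀ i, Measure (Ω i)) [∀ i, IsProbabilityMeasure (μ i)] (S : ∀ i, Set (Ω i))
    (h : ∀ ε : ℝ, 0 < ε → ∀ᶠ i in l, μ i (S i)ᶜ ≤ ENNReal.ofReal ε) :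
    Tendsto (fun i => μ i (S i)) l (𝓝 1) := by
  have hcompl : Tendsto (fun i => μ i (S i)ᶜ) l (𝓝 0) := by
    refine ENNReal.tendsto_nhds_zero.mpr fun ε hε => ?_
    obtain ⟨r, -, hr, hrε⟩ := ENNReal.lt_iff_exists_real_btwn.mp hε
    exact (h r (ENNReal.ofReal_pos.mp hr)).mono fun i hi => hi.trans hrε.le
  refine tendsto_of_tendsto_of_tendsto_of_le_of_le (g := fun i => 1 - μ i (S i)ᶜ)
    ?_ tendsto_const_nhds (fun i => ?_) (fun i => prob_le_one)
  · simpa using ENNReal.Tendsto.sub tendsto_const_nhds hcompl (Or.inl ENNReal.one_ne_top)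
  · rw [tsub_le_iff_right, ← measure_univ (μ := μ i)]
    exact measure_univ_le_add_compl _

end Asymptotics

theorem statement18_of_paper_general {K₀ : ℕ} (hK₀ : 1 ≤ K₀) (c₀ : ℝ) (hc₀ : 0 < c₀)
    (n : ℕ → ℕ)
    (Ω : ℕ → Type*) [∀ T, MeasurableSpace (Ω T)]
    (μ : ∀ T, Measure (Ω T)) [∀ T, IsProbabilityMeasure (μ T)]
    (dh : ∀ T, Ω T → Fin (n T) → Fin (n T) → ℝ)
    (G : ∀ T, Fin K₀ → Finset (Fin (n T)))
    (hG : ∀ T, IsGroupPartition (G T))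
    (hmax : ℕ → ℝ) (hhmax : ∀ T, 0 < hmax T)
    (hratio : Tendsto
      (fun T : ℕ => (Real.log (n T) + Real.log (T : ℝ)) / ((T : ℝ) * hmax T))
      atTop (nhds 0))
    -- property (8): the within-group maximum is O_p(√(log n + log T))
    (h8 : ∀ ε : ℝ, 0 < ε → ∃ C : ℝ,
      Filter.limsup
        (fun T => μ T {ω |
          C * Real.sqrt (Real.log (n T) + Real.log (T : ℝ)) < withinMax (dh T ω) (G T)})
        atTop ≤ ENNReal.ofReal ε)
    -- property (9): the between-group minimum is ≥ c₀·√(T·h_max) + o_p(√(T·h_max))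
    (h9 : 1 < K₀ → ∃ R : ∀ T, Ω T → ℝ,
      (∀ (T : ℕ) (ω : Ω T), c₀ * Real.sqrt ((T : ℝ) * hmax T) + R T ω ≤ betweenMin (dh T ω) (G T)) ∧
        ∀ ε : ℝ, 0 < ε →
          Tendsto (fun T => μ T {ω | ε * Real.sqrt ((T : ℝ) * hmax T) < |R T ω|})
            atTop (nhds 0))
    -- property (10): √(log n + log T) ≪ π_T ≪ √(T·h_max)
    (π : ℕ → ℝ)
    (hπ1 : Tendsto
      (fun T => π T / Real.sqrt (Real.log (n T) + Real.log (T : ℝ))) atTop atTop) :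
    Tendsto
      (fun T => μ T {ω | ∀ Q, IsHACChain (dh T ω) Q →
        ∀ C ∈ Q (n T - K₀), cDiam (dh T ω) C ≤ ((π T : ℝ) : EReal)})
      atTop (nhds (1 : ENNReal)) := by
  refine tendsto_measure_one_of_eventually_compl_le μ _ fun ε hε => ?_
  obtain ⟨C, hC⟩ := h8 (ε / 4) (by positivity)
  have hwithin : ∀ᶠ T in atTop, μ T {ω |
      C * Real.sqrt (Real.log (n T) + Real.log (T : ℝ)) < withinMax (dh T ω) (G T)} <
        ENNReal.ofReal (ε / 2) :=
    eventually_lt_of_limsup_lt (hC.trans_lt ((ENNReal.ofReal_lt_ofReal_iff (by positivity)).mpr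
      (by linarith)))
  have hCπ := eventually_mul_le_of_tendsto_div_atTop (fun _ => Real.sqrt_nonneg _) hπ1 C
  rcases hK₀.eq_or_lt with hK1 | hK1
  · filter_upwards [hwithin, hCπ] with T hW hCπ
    refine (measure_mono (Set.compl_subset_comm.mp fun ω hω => ?_)).trans
      (hW.le.trans (ENNReal.ofReal_le_ofReal (by linarith)))
    simp only [Set.mem_compl_iff, Set.mem_ofPred_eq, not_lt] at hω
    exact fun Q hQ => hQ.cDiam_le hK₀ (hG T) (isSeparated_of_le_one _ _ hK1.ge) (hω.trans hCπ)
  obtain ⟨R, hR, hRsmall⟩ := h9 hK1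
  have hbetween := (hRsmall (c₀ / 2) (by positivity)).eventually_lt_const
    (ENNReal.ofReal_pos.mpr (half_pos hε))
  have hgap := eventually_mul_sqrt_lt_of_tendsto_div
    ((eventually_ge_atTop 1).mono fun T hT => mul_pos (by exact_mod_cast hT) (hhmax T))
    hratio C (half_pos hc₀)
  filter_upwards [hwithin, hbetween, hCπ, hgap] with T hW hB hCπ hgap
  refine (measure_mono (Set.compl_subset_comm.mp fun ω hω => ?_)).trans
    ((measure_union_le _ _).trans ((add_le_add hW.le hB.le).trans_eq ?_))
  · simp only [Set.compl_union, Set.mem_inter_iff, Set.mem_compl_iff, Set.mem_ofPred_eq,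
      not_lt] at hω
    have hsep : withinMax (dh T ω) (G T) < betweenMin (dh T ω) (G T) := by
      linarith [hR T ω, neg_abs_le (R T ω)]
    exact fun Q hQ => hQ.cDiam_le hK₀ (hG T) (isSeparated_of_withinMax_lt_betweenMin _ _ hsep)
      (hω.1.trans hCπ)
  · rw [← ENNReal.ofReal_add (by positivity) (by positivity), add_halves]

/-- **Statement (18) of the paper.** Under the hypotheses of Theorem 2, the probability
that every cluster of the HAC partition into `K₀` clusters has within-cluster
dissimilarity at most `π_T` tends to `1`. -/
theorem statement18_of_paper {K₀ : ℕ} (hK₀ : 1 ≤ K₀) (c₀ : ℝ) (hc₀ : 0 < c₀)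
    (n : ℕ → ℕ) (hn : ∀ T, K₀ ≤ n T)
    (Ω : ℕ → Type*) [∀ T, MeasurableSpace (Ω T)]
    (μ : ∀ T, Measure (Ω T)) [∀ T, IsProbabilityMeasure (μ T)]
    (dh : ∀ T, Ω T → Fin (n T) → Fin (n T) → ℝ)
    (hsym : ∀ T ω i j, dh T ω i j = dh T ω j i)
    (G : ∀ T, Fin K₀ → Finset (Fin (n T)))
    (hG : ∀ T, IsGroupPartition (G T))
    (hmax : ℕ → ℝ) (hhmax : ∀ T, 0 < hmax T)
    (hratio : Tendsto
      (fun T : ℕ => (Real.log (n T) + Real.log (T : ℝ)) / ((T : ℝ) * hmax T))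
      atTop (nhds 0))
    -- property (8): the within-group maximum is O_p(√(log n + log T))
    (h8 : ∀ ε : ℝ, 0 < ε → ∃ C : ℝ,
      Filter.limsup
        (fun T => μ T {ω |
          C * Real.sqrt (Real.log (n T) + Real.log (T : ℝ)) < withinMax (dh T ω) (G T)})
        atTop ≤ ENNReal.ofReal ε)
    -- property (9): the between-group minimum is ≥ c₀·√(T·h_max) + o_p(√(T·h_max))
    (h9 : 1 < K₀ → ∃ R : ∀ T, Ω T → ℝ,
      (∀ (T : ℕ) (ω : Ω T), c₀ * Real.sqrt ((T : ℝ) * hmax T) + R T ω ≤ betweenMin (dh T ω) (G T)) ∧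
        ∀ ε : ℝ, 0 < ε →
          Tendsto (fun T => μ T {ω | ε * Real.sqrt ((T : ℝ) * hmax T) < |R T ω|})
            atTop (nhds 0))
    -- property (10): √(log n + log T) ≪ π_T ≪ √(T·h_max)
    (π : ℕ → ℝ)
    (hπ1 : Tendsto
      (fun T => π T / Real.sqrt (Real.log (n T) + Real.log (T : ℝ))) atTop atTop)
    (hπ2 : Tendsto
      (fun T => π T / Real.sqrt ((T : ℝ) * hmax T)) atTop (nhds 0)) :
    Tendsto
      (fun T => μ T {ω | ∀ Q, IsHACChain (dh T ω) Q →
        ∀ C ∈ Q (n T - K₀), cDiam (dh T ω) C ≤ ((π T : ℝ) : EReal)})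
      atTop (nhds (1 : ENNReal)) :=
  statement18_of_paper_general hK₀ c₀ hc₀ n Ω μ dh G hG hmax hhmax hratio h8 h9 π hπ1
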